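/- For every well founded functional F and every k ≥ 0, ⌊μF⌋_k = ⌊F(μF)⌋_k. -/
import Mathlib


/-- Terms of the call-by-name λ-calculus with constants and a fixpoint operator. -/
inductive Tm where
  | const : ℕ → Tm
  | var : String → Tm
  | lam : String → Tm → Tm
  | app : Tm → Tm → Tm
  | fix : Tm → Tm
deriving DecidableEq

/-- Substitution of `b` for free occurrences of `x` (capture-avoiding when `b` is closed). -/
def subst (x : String) (b : Tm) : Tm → Tm
  | .const c => .const c
  | .var y => if y = x then b else .var y
  | .lam y a => if y = x then .lam y a else .lam y (subst x b a)
  | .app a1 a2 => .app (subst x b a1) (subst x b a2)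
  | .fix a => .fix (subst x b a)

/-- Free variables. -/
def fv : Tm → Set String
  | .const _ => ∅
  | .var y => {y}
  | .lam y a => fv a \ {y}
  | .app a b => fv a ∪ fv b
  | .fix a => fv a

def Closed (a : Tm) : Prop := fv a = ∅

/-- Call-by-name small-step semantics. -/
inductive Step : Tm → Tm → Prop
  | beta (x : String) (a b : Tm) : Step (.app (.lam x a) b) (subst x b a)
  | app1 {a a' : Tm} (b : Tm) : Step a a' → Step (.app a b) (.app a' b)
  | fix (a : Tm) : Step (.fix a) (.app a (.fix a))

/-- `Steps j a b` means `a →^j b`. -/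
inductive Steps : ℕ → Tm → Tm → Prop
  | refl (a : Tm) : Steps 0 a a
  | head {a b c : Tm} {j : ℕ} : Step a b → Steps j b c → Steps (j + 1) a c

/-- Values: constants and closed λ-abstractions. -/
def IsValue (v : Tm) : Prop :=
  (∃ c, v = .const c) ∨ (∃ x a, v = .lam x a ∧ Closed v)

/-- Irreducible terms. -/
def Irred (a : Tm) : Prop := ¬ ∃ b, Step a b

/-- Semantic types are sets of pairs (index, value). -/
abbrev SemType := Set (ℕ × Tm)

/-- A type contains only values and is closed under decreasing index. -/
def IsType (τ : SemType) : Prop :=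
  (∀ p ∈ τ, IsValue p.2) ∧ ∀ k v j, (k, v) ∈ τ → j ≤ k → (j, v) ∈ τ

/-- `a :ₖ τ`: `a` is closed and whenever `a →^j b` with `b` irreducible and `j < k`,
then `(k - j, b) ∈ τ`. -/
def HasTypeIdx (a : Tm) (k : ℕ) (τ : SemType) : Prop :=
  Closed a ∧ ∀ j b, j < k → Steps j a b → Irred b → (k - j, b) ∈ τ

/-- The semantic function type `τ → τ'`. -/
def Arrow (τ τ' : SemType) : SemType :=
  {p | ∃ x a, p.2 = Tm.lam x a ∧ Closed (Tm.lam x a) ∧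
    ∀ j < p.1, ∀ b, HasTypeIdx b j τ → HasTypeIdx (subst x b a) j τ'}

/-- The semantic type `Nat` of constants. -/
def NatTy : SemType := {p | ∃ c, p.2 = Tm.const c}

/-- `a` is safe for `k` steps. -/
def SafeFor (k : ℕ) (a : Tm) : Prop :=
  ∀ j b, j < k → Steps j a b → IsValue b ∨ ∃ b', Step b b'

/-- `a` is safe. -/
def Safe (a : Tm) : Prop := ∀ k, SafeFor k a

/-- Applying a ground substitution `γ` to a term. -/
def applySubst (γ : String → Option Tm) : Tm → Tm
  | .const c => .const c
  | .var y => (γ y).getD (.var y)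
  | .lam y a => .lam y (applySubst (fun z => if z = y then none else γ z) a)
  | .app a b => .app (applySubst γ a) (applySubst γ b)
  | .fix a => .fix (applySubst γ a)

/-- `γ :ₖ Γ`: same domains, and `γ(x) :ₖ Γ(x)` for all `x`. -/
def EnvOK (γ : String → Option Tm) (Γ : String → Option SemType) (k : ℕ) : Prop :=
  (∀ x, (γ x).isSome ↔ (Γ x).isSome) ∧
  ∀ x t τ, γ x = some t → Γ x = some τ → HasTypeIdx t k τ

/-- A type environment maps variables to (semantic) types. -/
def TyEnvOK (Γ : String → Option SemType) : Prop :=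
  ∀ x τ, Γ x = some τ → IsType τ

/-- `Γ ⊨ a :ₖ τ`. -/
def ModelsIdx (Γ : String → Option SemType) (a : Tm) (k : ℕ) (τ : SemType) : Prop :=
  ∀ γ, EnvOK γ Γ k → HasTypeIdx (applySubst γ a) k τ

/-- `Γ ⊨ a : τ`. -/
def Models (Γ : String → Option SemType) (a : Tm) (τ : SemType) : Prop :=
  ∀ k, ModelsIdx Γ a k τ

/-- Update of a partial map. -/
def upd {α : Type _} (f : String → Option α) (x : String) (v : α) :
    String → Option α := fun y => if y = x then some v else f y

/-- The k-approximation of an indexed set. -/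
def floorTy (τ : SemType) (k : ℕ) : SemType := {p ∈ τ | p.1 < k}

/-- Well founded functionals. -/
def WFF (F : SemType → SemType) : Prop :=
  (∀ τ, IsType τ → IsType (F τ)) ∧
  ∀ τ k, IsType τ → floorTy (F τ) (k + 1) = floorTy (F (floorTy τ k)) (k + 1)

/-- The candidate fixed point `μF`. -/
def muF (F : SemType → SemType) : SemType := {p | p ∈ F^[p.1 + 1] ∅}


lemma emptyIsType : IsType (∅ : SemType) := ⟨fun _ h => h.elim, fun _ _ _ h => h.elim⟩

lemma iterIsType (F : SemType → SemType) (hF : WFF F) (n : ℕ) :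
    IsType (F^[n] ∅) := by
  induction n with
  | zero => exact emptyIsType
  | succ n ih => rw [Function.iterate_succ_apply']; exact hF.1 _ ih

lemma lemA (F : SemType → SemType) (hF : WFF F) :
    ∀ n m, n ≤ m → floorTy (F^[m] ∅) n = floorTy (F^[n] ∅) n := by
  intro n
  induction n with
  | zero =>
    intro m _
    ext p; simp [floorTy]
  | succ n ih =>
    intro m hm
    obtain ⟨m', rfl⟩ : ∃ m', m = m' + 1 := ⟨m - 1, by omega⟩
    have hn : n ≤ m' := by omega
    rw [Function.iterate_succ_apply', Function.iterate_succ_apply',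
      hF.2 (F^[m'] ∅) n (iterIsType F hF m'),
      hF.2 (F^[n] ∅) n (iterIsType F hF n), ih m' hn]

lemma muIsType (F : SemType → SemType) (hF : WFF F) : IsType (muF F) := by
  constructor
  · intro p hp
    exact (iterIsType F hF (p.1 + 1)).1 p hp
  · intro k v j hk hj
    have h1 : (j, v) ∈ F^[k + 1] ∅ := (iterIsType F hF (k + 1)).2 k v j hk hj
    have h2 := lemA F hF (j + 1) (k + 1) (by omega)
    have : (j, v) ∈ floorTy (F^[k + 1] ∅) (j + 1) := ⟨h1, by omega⟩
    rw [h2] at this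
    exact this.1

lemma floor_mu_iter (F : SemType → SemType) (hF : WFF F) (n : ℕ) :
    floorTy (muF F) n = floorTy (F^[n] ∅) n := by
  ext ⟨j, v⟩
  constructor
  · rintro ⟨h1, h2⟩
    have := lemA F hF (j + 1) n (by omega)
    have hm : (j, v) ∈ floorTy (F^[j + 1] ∅) (j + 1) := ⟨h1, by omega⟩
    rw [← this] at hm
    exact ⟨(iterIsType F hF n).2 j v j hm.1 le_rfl, h2⟩
  · rintro ⟨h1, h2⟩
    have := lemA F hF (j + 1) n (by omega)
    have hm : (j, v) ∈ floorTy (F^[n] ∅) (j + 1) := ⟨h1, by omega⟩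
    rw [this] at hm
    exact ⟨hm.1, h2⟩

theorem floor_muF (F : SemType → SemType) (hF : WFF F) (k : ℕ) :
    floorTy (muF F) k = floorTy (F (muF F)) k := by
  cases k with
  | zero => ext p; simp [floorTy]
  | succ n =>
    rw [floor_mu_iter F hF (n + 1), Function.iterate_succ_apply',
      hF.2 (muF F) n (muIsType F hF), hF.2 (F^[n] ∅) n (iterIsType F hF n),
      floor_mu_iter F hF n]
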